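/- arXiv:2312.00620 — 2 statements merged into one kernel-verified Lean document; each statement's English description precedes it below -/
import Mathlib

section
/- Let G be a connected graph on k vertices with no Hamiltonian path but containing a path P = (v_1, ..., v_{k-1}), and let u be the vertex not on P with neighbors on P exactly {v_{i_1}, ..., v_{i_s}}, i_1 < i_2 < ... < i_s. Then there is no edge of G of any of the following forms: v_{i_j+1}v_{i_r+1} or v_{i_j-1}v_{i_r-1} for 1 ≤ j < r ≤ s, and v_1 v_{i_t+1} or v_{i_t-1} v_{k-1} for 1 ≤ t ≤ s. -/
open SimpleGraph

/-- `H` has a copy in `G`, i.e. `G` contains `H` as a (not necessarily induced) subgraph. -/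
def CopyIn {α β : Type*} (H : SimpleGraph α) (G : SimpleGraph β) : Prop :=
  ∃ f : α ↪ β, ∀ a b, H.Adj a b → G.Adj (f a) (f b)

/-- The join `G ∨ H` of two graphs: disjoint union plus all edges in between. -/
def graphJoin {α β : Type*} (G : SimpleGraph α) (H : SimpleGraph β) : SimpleGraph (α ⊕ β) where
  Adj x y := (∃ a b, x = Sum.inl a ∧ y = Sum.inl b ∧ G.Adj a b) ∨
    (∃ a b, x = Sum.inr a ∧ y = Sum.inr b ∧ H.Adj a b) ∨
    (x.isLeft ∧ y.isRight) ∨ (x.isRight ∧ y.isLeft)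
  symm := by
    refine ⟨?_⟩
    rintro x y (⟨a, b, rfl, rfl, h⟩ | ⟨a, b, rfl, rfl, h⟩ | ⟨h1, h2⟩ | ⟨h1, h2⟩)
    · exact Or.inl ⟨b, a, rfl, rfl, h.symm⟩
    · exact Or.inr (Or.inl ⟨b, a, rfl, rfl, h.symm⟩)
    · exact Or.inr (Or.inr (Or.inr ⟨h2, h1⟩))
    · exact Or.inr (Or.inr (Or.inl ⟨h2, h1⟩))
  loopless := by
    refine ⟨?_⟩
    rintro x (⟨a, b, rfl, heq, h⟩ | ⟨a, b, rfl, heq, h⟩ | ⟨h1, h2⟩ | ⟨h1, h2⟩)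
    · cases heq; exact G.loopless.irrefl _ h
    · cases heq; exact H.loopless.irrefl _ h
    · cases x <;> simp_all
    · cases x <;> simp_all

/-- A matching with `t` edges. -/
def matchingGraph (t : ℕ) : SimpleGraph (Fin t × Fin 2) :=
  SimpleGraph.fromRel (fun p q => p.1 = q.1)

/-- The star with `t` edges. -/
def starGraph (t : ℕ) : SimpleGraph (Fin 1 ⊕ Fin t) := completeBipartiteGraph (Fin 1) (Fin t)

/-- Turán number of a single forbidden graph. -/
noncomputable def exNum1 {α : Type*} (n : ℕ) (A : SimpleGraph α) : ℕ :=
  sSup {e | ∃ G : SimpleGraph (Fin n), ¬ CopyIn A G ∧ e = G.edgeSet.ncard}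

/-- Turán number of two forbidden graphs. -/
noncomputable def exNum2 {α β : Type*} (n : ℕ) (A : SimpleGraph α) (B : SimpleGraph β) : ℕ :=
  sSup {e | ∃ G : SimpleGraph (Fin n),
    ¬ CopyIn A G ∧ ¬ CopyIn B G ∧ e = G.edgeSet.ncard}

/-- Connected Turán number of two forbidden graphs. -/
noncomputable def exConn2 {α β : Type*} (n : ℕ) (A : SimpleGraph α) (B : SimpleGraph β) : ℕ :=
  sSup {e | ∃ G : SimpleGraph (Fin n),
    G.Connected ∧ ¬ CopyIn A G ∧ ¬ CopyIn B G ∧ e = G.edgeSet.ncard}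

/-- Turán number of a family of forbidden graphs. -/
noncomputable def exNumFam (n : ℕ) (F : Set (Σ V : Type, SimpleGraph V)) : ℕ :=
  sSup {e | ∃ G : SimpleGraph (Fin n),
    (∀ M ∈ F, ¬ CopyIn M.2 G) ∧ e = G.edgeSet.ncard}

/-- The family of graphs obtained from `H` by deleting one color class of a proper coloring
of `H` with `χ(H)` colors. -/
def delClassFam {W : Type} (H : SimpleGraph W) : Set (Σ V : Type, SimpleGraph V) :=
  {M | ∃ (m : ℕ) (C : H.Coloring (Fin m)) (c : Fin m),
    H.chromaticNumber = (m : ℕ∞) ∧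
    M = ⟨{v : W | C v ≠ c}, H.induce {v : W | C v ≠ c}⟩}

/-- The family of graphs obtained from `H` by deleting two adjacent vertices. -/
def delPairFam {W : Type} (H : SimpleGraph W) : Set (Σ V : Type, SimpleGraph V) :=
  {M | ∃ u v : W, H.Adj u v ∧
    M = ⟨{x : W | x ≠ u ∧ x ≠ v}, H.induce {x : W | x ≠ u ∧ x ≠ v}⟩}
/-!
Each forbidden edge, together with `u`, reroutes `P` into a Hamiltonian path of `G` by a
Pósa rotation. For `v_{i+1} v_{r+1}` with `i < r` take
`v_1 … v_i u v_r v_{r-1} … v_{i+1} v_{r+1} … v_{k-1}`, and for `v_1 v_{t+1}` take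
`u v_t … v_1 v_{t+1} … v_{k-1}`, which is the same path with an empty prefix `i = 0`.
The other two forms are the first two for `P` read backwards.
-/

namespace SimpleGraph

variable {V : Type*} {G : SimpleGraph V} {k : ℕ}

lemma copyIn_pathGraph_of_injOn (w : ℕ → V) (hinj : Set.InjOn w (Set.Iio k))
    (hadj : ∀ t, t + 1 < k → G.Adj (w t) (w (t + 1))) :
    CopyIn (pathGraph k) G := by
  refine ⟨⟨fun x => w x, fun a b h => Fin.ext (hinj a.isLt b.isLt h)⟩, fun a b hab => ?_⟩
  change G.Adj (w a) (w b)
  rcases (pathGraph_adj).mp hab with h | h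
  · simpa only [← h] using hadj a (h ▸ b.isLt)
  · simpa only [← h] using (hadj b (h ▸ a.isLt)).symm

/-- `v 1, …, v (k - 1)` is a path of `G` avoiding the vertex `u`. -/
structure IsPathAvoiding (G : SimpleGraph V) (k : ℕ) (v : ℕ → V) (u : V) : Prop where
  injOn : Set.InjOn v (Set.Icc 1 (k - 1))
  adj : ∀ i, 1 ≤ i → i ≤ k - 2 → G.Adj (v i) (v (i + 1))
  ne : ∀ i ∈ Set.Icc 1 (k - 1), v i ≠ u

namespace IsPathAvoiding

variable {v : ℕ → V} {u : V}

lemma reverse (hP : G.IsPathAvoiding k v u) : G.IsPathAvoiding k (fun j => v (k - j)) u where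
  injOn a ha b hb h := by
    have := hP.injOn (x₁ := k - a) ⟨by grind, by grind⟩ ⟨by grind, by grind⟩ h
    grind
  adj j hj1 hj2 := by
    have hsucc : k - (j + 1) + 1 = k - j := by omega
    simpa only [hsucc] using (hP.adj (k - (j + 1)) (by omega) (by omega)).symm
  ne j hj := hP.ne (k - j) ⟨by grind, by grind⟩

/-- The rotated path `v_1 … v_i u v_r … v_{i+1} v_{r+1} … v_{k-1}`; for `i = 0` its prefix
`v_1 … v_i` is empty and `u` need not be adjacent to `v 0`. -/
lemma copyIn_pathGraph_of_chord (hP : G.IsPathAvoiding k v u) {i r : ℕ} (hir : i < r)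
    (hrk : r + 1 ≤ k - 1) (hui : 0 < i → G.Adj u (v i)) (hur : G.Adj u (v r))
    (hchord : G.Adj (v (i + 1)) (v (r + 1))) : CopyIn (pathGraph k) G := by
  refine copyIn_pathGraph_of_injOn
    (fun t => if t < i then v (t + 1) else if t = i then u
      else if t ≤ r then v (r + i + 1 - t) else v t) ?_ ?_
  · -- the sequence is `u` exactly at `i`, elsewhere `v` at an index in `[1, k - 1]` fixing `t`
    intro a ha b hb h
    simp only [Set.mem_Iio] at ha hb
    dsimp only at h
    split_ifs at h <;>
      first
        | omega
        | exact absurd h (hP.ne _ ⟨by omega, by omega⟩)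
        | exact absurd h.symm (hP.ne _ ⟨by omega, by omega⟩)
        | have := hP.injOn ⟨by omega, by omega⟩ ⟨by omega, by omega⟩ h; omega
  · intro t ht
    obtain h | h | rfl | h | rfl | h :
        t + 1 < i ∨ t + 1 = i ∨ t = i ∨ (i < t ∧ t < r) ∨ t = r ∨ r < t := by omega
    all_goals simp (disch := omega) only [if_pos, if_neg, ↓reduceIte]
    · exact hP.adj (t + 1) (by omega) (by omega)
    · exact h ▸ (hui (by omega)).symm
    · simpa only [show r + t + 1 - (t + 1) = r by omega] using hur
    · have hsucc : r + i + 1 - (t + 1) + 1 = r + i + 1 - t := by omega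
      simpa only [hsucc] using (hP.adj (r + i + 1 - (t + 1)) (by omega) (by omega)).symm
    · simpa only [show t + i + 1 - t = i + 1 by omega] using hchord
    · exact hP.adj t (by omega) (by omega)

lemma not_adj_succ_succ (hP : G.IsPathAvoiding k v u) (hno : ¬ CopyIn (pathGraph k) G)
    {i r : ℕ} (hne : i ≠ r) (hik : i + 1 ≤ k - 1) (hrk : r + 1 ≤ k - 1)
    (hui : G.Adj u (v i)) (hur : G.Adj u (v r)) : ¬ G.Adj (v (i + 1)) (v (r + 1)) := by
  intro hchord
  rcases hne.lt_or_gt with hir | hri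
  · exact hno (hP.copyIn_pathGraph_of_chord hir hrk (fun _ => hui) hur hchord)
  · exact hno (hP.copyIn_pathGraph_of_chord hri hik (fun _ => hur) hui hchord.symm)

lemma not_adj_one_succ (hP : G.IsPathAvoiding k v u) (hno : ¬ CopyIn (pathGraph k) G)
    {t : ℕ} (ht : 1 ≤ t) (htk : t + 1 ≤ k - 1) (hut : G.Adj u (v t)) :
    ¬ G.Adj (v 1) (v (t + 1)) :=
  fun hchord => hno (hP.copyIn_pathGraph_of_chord ht htk (absurd · (lt_irrefl 0)) hut hchord)

end IsPathAvoiding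

end SimpleGraph

theorem lemma_no_ham_path_forbidden_edges_general {V : Type*} (G : SimpleGraph V)
    (k : ℕ)
    (hnoHam : ¬ CopyIn (pathGraph k) G)
    (v : ℕ → V)
    (hinj : Set.InjOn v (Set.Icc 1 (k - 1)))
    (hadj : ∀ i, 1 ≤ i → i ≤ k - 2 → G.Adj (v i) (v (i + 1)))
    (u : V) (hu : ∀ i ∈ Set.Icc 1 (k - 1), v i ≠ u)
    (N : Set ℕ) (hN : N ⊆ Set.Icc 1 (k - 1))
    (hNdef : ∀ i ∈ Set.Icc 1 (k - 1), (i ∈ N ↔ G.Adj u (v i))) :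
    (∀ i ∈ N, ∀ r ∈ N, i ≠ r → i + 1 ≤ k - 1 → r + 1 ≤ k - 1 →
        ¬ G.Adj (v (i + 1)) (v (r + 1))) ∧
    (∀ i ∈ N, ∀ r ∈ N, i ≠ r → 2 ≤ i → 2 ≤ r →
        ¬ G.Adj (v (i - 1)) (v (r - 1))) ∧
    (∀ t ∈ N, t + 1 ≤ k - 1 → ¬ G.Adj (v 1) (v (t + 1))) ∧
    (∀ t ∈ N, 2 ≤ t → ¬ G.Adj (v (t - 1)) (v (k - 1))) := by
  have hP : G.IsPathAvoiding k v u := ⟨hinj, hadj, hu⟩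
  have hNadj : ∀ i ∈ N, G.Adj u (v i) := fun i hi => (hNdef i (hN hi)).mp hi
  have hNadj_rev : ∀ i ∈ N, G.Adj u (v (k - (k - i))) := fun i hi => by
    rw [Nat.sub_sub_self ((hN hi).2.trans (Nat.sub_le k 1))]
    exact hNadj i hi
  refine ⟨?_, ?_, ?_, ?_⟩
  · intro i hi r hr hne hik hrk
    exact hP.not_adj_succ_succ hnoHam hne hik hrk (hNadj i hi) (hNadj r hr)
  · intro i hi r hr hne hi2 hr2
    obtain ⟨-, hik⟩ := hN hi
    obtain ⟨-, hrk⟩ := hN hr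
    have hrev := hP.reverse.not_adj_succ_succ hnoHam (i := k - i) (r := k - r)
      (by omega) (by omega) (by omega) (hNadj_rev i hi) (hNadj_rev r hr)
    convert hrev using 3 <;> omega
  · intro t ht htk
    exact hP.not_adj_one_succ hnoHam (hN ht).1 htk (hNadj t ht)
  · intro t ht ht2
    obtain ⟨-, htk⟩ := hN ht
    have hrev := hP.reverse.not_adj_one_succ hnoHam (t := k - t)
      (by omega) (by omega) (hNadj_rev t ht)
    rw [adj_comm]
    convert hrev using 3; omega

theorem lemma_no_ham_path_forbidden_edges {V : Type*} [Fintype V] (G : SimpleGraph V)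
    (k : ℕ) (hcard : Fintype.card V = k) (hconn : G.Connected)
    (hnoHam : ¬ CopyIn (pathGraph k) G)
    (v : ℕ → V)
    (hinj : Set.InjOn v (Set.Icc 1 (k - 1)))
    (hadj : ∀ i, 1 ≤ i → i ≤ k - 2 → G.Adj (v i) (v (i + 1)))
    (u : V) (hu : ∀ i ∈ Set.Icc 1 (k - 1), v i ≠ u)
    (N : Set ℕ) (hN : N ⊆ Set.Icc 1 (k - 1))
    (hNdef : ∀ i ∈ Set.Icc 1 (k - 1), (i ∈ N ↔ G.Adj u (v i))) :
    (∀ i ∈ N, ∀ r ∈ N, i ≠ r → i + 1 ≤ k - 1 → r + 1 ≤ k - 1 →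
        ¬ G.Adj (v (i + 1)) (v (r + 1))) ∧
    (∀ i ∈ N, ∀ r ∈ N, i ≠ r → 2 ≤ i → 2 ≤ r →
        ¬ G.Adj (v (i - 1)) (v (r - 1))) ∧
    (∀ t ∈ N, t + 1 ≤ k - 1 → ¬ G.Adj (v 1) (v (t + 1))) ∧
    (∀ t ∈ N, 2 ≤ t → ¬ G.Adj (v (t - 1)) (v (k - 1))) :=
  lemma_no_ham_path_forbidden_edges_general G k hnoHam v hinj hadj u hu N hN hNdef
end

section
/- Let t ≥ 1 and n ≥ 2t. If t is odd, the maximum number of edges in an n-vertex graph containing neither a matching of t edges nor a star with t edges is t² - t, attained by the disjoint union of two copies of K_t (plus isolated vertices). -/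
open SimpleGraph

/-!
Upper bound. A graph with maximum degree at most `d` and a maximum matching covering `2ν`
vertices has at most `(d + 1) ν` edges; forbidding `S_t` and `M_t` gives `d, ν ≤ t - 1`, hence
at most `t² - t` edges. The `(d + 1) ν` bound is proved by induction on `ν`. If some vertex `w`
is covered by every maximum matching, deleting the edges at `w` lowers `ν` and loses at most `d`
edges. Otherwise Gallai's lemma says that a maximum matching misses at most one vertex of each
component, and a component on `c ≤ 2a + 1` vertices, `2a` of them matched, carries at most
`c · min d (c - 1) / 2 ≤ (d + 1) a` edges. Gallai's lemma is proved by exchanging two maximum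
matchings along the alternating path that starts at a vertex missed by one of them.

Lower bound. For odd `t`, every matching of `K_t` misses a vertex, so `2 K_t` has no `M_t`; its
degrees are `t - 1`, so it has no `S_t`.
-/

namespace SimpleGraph

open Finset

variable {V W : Type*}

lemma copyIn_iff_isContained {α : Type*} {A : SimpleGraph α} {G : SimpleGraph V} :
    CopyIn A G ↔ A ⊑ G :=
  ⟨fun ⟨f, hf⟩ => ⟨⟨⟨f, hf _ _⟩, f.injective⟩⟩,
    fun ⟨f⟩ => ⟨f.toEmbedding, fun _ _ => f.toHom.map_adj⟩⟩

lemma copyIn_starGraph_iff {G : SimpleGraph V} [G.LocallyFinite] {t : ℕ} :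
    CopyIn (_root_.starGraph t) G ↔ ∃ v, t ≤ G.degree v := by
  constructor
  · rintro ⟨F, hF⟩
    refine ⟨F (.inl 0), ?_⟩
    have key := Fintype.card_le_of_injective (β := G.neighborSet (F (.inl 0)))
      (fun j => ⟨F (.inr j), hF (.inl 0) (.inr j) (by simp [_root_.starGraph])⟩)
      fun i j h => Sum.inr_injective (F.injective (congrArg Subtype.val h))
    rwa [Fintype.card_fin, card_neighborSet_eq_degree] at key
  · rintro ⟨v, hv⟩
    rw [← card_neighborSet_eq_degree, ← Fintype.card_fin t] at hv
    obtain ⟨φ⟩ := Function.Embedding.nonempty_of_card_le hv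
    refine ⟨⟨Sum.elim (fun _ => v) (fun j => φ j), ?_⟩, ?_⟩
    · exact Function.injective_of_subsingleton _ |>.sumElim
        (Subtype.val_injective.comp φ.injective) fun _ j => (φ j).2.ne
    · rintro (a | a) (b | b) h <;> simp [_root_.starGraph] at h
      · exact (φ b).2
      · exact (φ a).2.symm

lemma two_mul_card_filter_le_of_copy {G : SimpleGraph W} [DecidableEq W] {t : ℕ}
    (F : Fin t × Fin 2 ↪ W) (hF : ∀ a b, (matchingGraph t).Adj a b → G.Adj (F a) (F b))
    {s : Finset W} (hs : ∀ x ∈ s, ∀ y, G.Adj x y → y ∈ s) :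
    2 * #{i | F (i, 0) ∈ s} ≤ #s := by
  have := card_le_card_of_injOn F (s := ({i | F (i, 0) ∈ s} : Finset (Fin t)) ×ˢ univ) (t := s) ?_
    F.injective.injOn
  · simpa [mul_comm] using this
  rintro ⟨i, j⟩ hij
  simp only [coe_product, Set.mem_prod, mem_coe, mem_filter, mem_univ, true_and] at hij
  fin_cases j
  · exact hij.1
  · exact hs _ hij.1 _ (hF (i, 0) (i, 1) (by simp [matchingGraph]))

lemma ncard_edgeSet_sum [Finite V] [Finite W] (G : SimpleGraph V) (H : SimpleGraph W) :
    (G ⊕g H).edgeSet.ncard = G.edgeSet.ncard + H.edgeSet.ncard := by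
  simp only [← Nat.card_coe_set_eq, Nat.card_congr edgeSetSumEquiv, Nat.card_sum]

lemma ncard_edgeSet_completeGraph [Fintype V] :
    (completeGraph V).edgeSet.ncard = (Fintype.card V).choose 2 := by
  classical
  rw [← coe_edgeFinset, Set.ncard_coe_finset]
  exact card_edgeFinset_top_eq_card_choose_two

lemma degree_sum_inl (G : SimpleGraph V) (H : SimpleGraph W) (v : V) [Fintype (G.neighborSet v)]
    [Fintype ((G ⊕g H).neighborSet (.inl v))] : (G ⊕g H).degree (.inl v) = G.degree v := by
  simp only [← card_neighborSet_eq_degree, ← Nat.card_eq_fintype_card, neighborSet_sum_inl,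
    Nat.card_image_of_injective Sum.inl_injective]

lemma degree_sum_inr (G : SimpleGraph V) (H : SimpleGraph W) (w : W) [Fintype (H.neighborSet w)]
    [Fintype ((G ⊕g H).neighborSet (.inr w))] : (G ⊕g H).degree (.inr w) = H.degree w := by
  simp only [← card_neighborSet_eq_degree, ← Nat.card_eq_fintype_card, neighborSet_sum_inr,
    Nat.card_image_of_injective Sum.inr_injective]

section MatchingInvolution

variable {G H : SimpleGraph V} {f g : V → V} {u v : V}

/-- A matching encoded as an involution: `v` is matched to `f v`, and unmatched if `f v = v`. -/
structure IsMatchingInvolution (G : SimpleGraph V) (f : V → V) : Prop where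
  involutive : Function.Involutive f
  adj_of_ne : ∀ v, f v ≠ v → G.Adj v (f v)

lemma isMatchingInvolution_id : IsMatchingInvolution G id :=
  ⟨fun _ => rfl, fun _ h => absurd rfl h⟩

lemma IsMatchingInvolution.mono (hf : IsMatchingInvolution G f) (h : G ≤ H) :
    IsMatchingInvolution H f :=
  ⟨hf.involutive, fun v hv => h (hf.adj_of_ne v hv)⟩

variable [DecidableEq V]

lemma IsMatchingInvolution.piecewise (hf : IsMatchingInvolution G f)
    (hg : IsMatchingInvolution G g) {P : Finset V} (hfP : ∀ x ∈ P, f x ∈ P)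
    (hgP : ∀ x ∈ P, g x ∈ P) : IsMatchingInvolution G (P.piecewise g f) := by
  have hfP' : ∀ x ∉ P, f x ∉ P := fun x hx h => hx (hf.involutive x ▸ hfP _ h)
  constructor
  · intro x
    by_cases hx : x ∈ P
    · simp [hx, hgP x hx, hg.involutive x]
    · simp [hx, hfP' x hx, hf.involutive x]
  · intro x
    by_cases hx : x ∈ P
    · simpa [hx] using hg.adj_of_ne x
    · simpa [hx] using hf.adj_of_ne x

variable [Fintype V]

def matchedVerts (f : V → V) : Finset V := {v | f v ≠ v}

@[simp] lemma mem_matchedVerts : v ∈ matchedVerts f ↔ f v ≠ v := by simp [matchedVerts]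

structure IsMaxMatchingInvolution (G : SimpleGraph V) (f : V → V) : Prop
    extends IsMatchingInvolution G f where
  card_le : ∀ g, IsMatchingInvolution G g → #(matchedVerts g) ≤ #(matchedVerts f)

lemma IsMatchingInvolution.even_card_matchedVerts (hf : IsMatchingInvolution G f) :
    Even #(matchedVerts f) := by
  have hsq : hf.involutive.toPerm f ^ 2 = 1 := Equiv.ext fun x => hf.involutive x
  have hsupp : (hf.involutive.toPerm f).support = matchedVerts f := by ext; simp
  exact even_iff_two_dvd.2 (hsupp ▸ Equiv.Perm.two_dvd_card_support hsq)

lemma exists_isMaxMatchingInvolution (G : SimpleGraph V) : ∃ f, IsMaxMatchingInvolution G f := by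
  classical
  obtain ⟨f, hf, hmax⟩ := exists_max_image {f : V → V | IsMatchingInvolution G f}
    (fun f => #(matchedVerts f)) ⟨id, by simpa using isMatchingInvolution_id⟩
  simp only [mem_filter, mem_univ, true_and] at hf hmax
  exact ⟨f, hf, hmax⟩

lemma card_matchedVerts_piecewise_add (P : Finset V) (f g : V → V) :
    #(matchedVerts (P.piecewise g f)) + #(matchedVerts (P.piecewise f g)) =
      #(matchedVerts f) + #(matchedVerts g) := by
  have split : ∀ h₁ h₂ : V → V, #(matchedVerts (P.piecewise h₁ h₂)) =
      #{x ∈ matchedVerts h₁ | x ∈ P} + #{x ∈ matchedVerts h₂ | x ∉ P} := by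
    intro h₁ h₂
    rw [← card_filter_add_card_filter_not (· ∈ P)]
    congr 2 <;> ext x <;> by_cases hx : x ∈ P <;> simp [hx]
  rw [split, split, ← card_filter_add_card_filter_not (s := matchedVerts f) (· ∈ P),
    ← card_filter_add_card_filter_not (s := matchedVerts g) (· ∈ P)]
  omega

lemma IsMaxMatchingInvolution.piecewise (hf : IsMaxMatchingInvolution G f)
    (hg : IsMaxMatchingInvolution G g) {P : Finset V} (hfP : ∀ x ∈ P, f x ∈ P)
    (hgP : ∀ x ∈ P, g x ∈ P) : IsMaxMatchingInvolution G (P.piecewise g f) := by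
  have h₁ := hf.toIsMatchingInvolution.piecewise hg.toIsMatchingInvolution hfP hgP
  have h₂ := hg.toIsMatchingInvolution.piecewise hf.toIsMatchingInvolution hgP hfP
  have := card_matchedVerts_piecewise_add P f g
  have := hf.card_le _ h₂
  have := hg.card_le _ hf.toIsMatchingInvolution
  exact ⟨h₁, fun k hk => by have := hf.card_le k hk; omega⟩

lemma IsMaxMatchingInvolution.not_adj (hf : IsMaxMatchingInvolution G f) (hu : f u = u)
    (hv : f v = v) : ¬ G.Adj u v := by
  intro huv
  have hσ : IsMatchingInvolution G (Equiv.swap u v) := by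
    refine ⟨Equiv.swap_apply_self u v, fun x hx => ?_⟩
    rcases eq_or_ne x u with rfl | hxu
    · simpa using huv
    rcases eq_or_ne x v with rfl | hxv
    · simpa using huv.symm
    · exact absurd (Equiv.swap_apply_of_ne_of_ne hxu hxv) hx
  have hP : ∀ x ∈ ({u, v} : Finset V), f x = x := by simp [hu, hv]
  have hσP : ∀ x ∈ ({u, v} : Finset V), Equiv.swap u v x ∈ ({u, v} : Finset V) := by
    simp only [mem_insert, mem_singleton]
    rintro x (rfl | rfl) <;> simp
  -- `{u, v}.piecewise (swap u v) f` is `f` augmented by the edge `uv`, and its counterpart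
  -- `{u, v}.piecewise f (swap u v)` matches nothing
  have hid : matchedVerts (({u, v} : Finset V).piecewise f (Equiv.swap u v)) = ∅ := by
    ext x
    by_cases hx : x ∈ ({u, v} : Finset V)
    · simp [hx, hP x hx]
    · simp only [mem_insert, mem_singleton, not_or] at hx
      simp [hx.1, hx.2, Equiv.swap_apply_of_ne_of_ne hx.1 hx.2]
  have hσcard : #(matchedVerts (Equiv.swap u v)) = 2 := Equiv.Perm.card_support_swap huv.ne
  have hcard := card_matchedVerts_piecewise_add {u, v} f (Equiv.swap u v)
  have := hf.card_le _ (hf.toIsMatchingInvolution.piecewise hσ (fun x hx => (hP x hx).symm ▸ hx) hσP)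
  rw [hσcard, hid, card_empty] at hcard
  omega

lemma IsMatchingInvolution.copyIn_matchingGraph (hf : IsMatchingInvolution G f) {t : ℕ}
    (ht : 2 * t ≤ #(matchedVerts f)) : CopyIn (matchingGraph t) G := by
  let _ : LinearOrder V := LinearOrder.lift' _ (Fintype.equivFin V).injective
  -- every matched pair has exactly one member below its partner
  set R : Finset V := {v | v < f v}
  have hcover : matchedVerts f ⊆ R ∪ R.image f := fun v hv => by
    rcases (mem_matchedVerts.1 hv).lt_or_gt with h | h
    · exact mem_union_right _ (mem_image.2 ⟨f v, by simp [R, hf.involutive v, h], hf.involutive v⟩)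
    · exact mem_union_left _ (by simp [R, h])
  have hR : t ≤ #R := by
    have := (card_le_card hcover).trans (card_union_le _ _)
    have := card_image_le (s := R) (f := f)
    omega
  obtain ⟨φ⟩ := Function.Embedding.nonempty_of_card_le (α := Fin t) (β := R) (by simpa using hR)
  have hlt : ∀ i, (φ i : V) < f (φ i) := fun i => (mem_filter.1 (φ i).2).2
  refine ⟨⟨fun p => f^[p.2] (φ p.1), ?_⟩, ?_⟩
  · rintro ⟨i, a⟩ ⟨j, b⟩ h
    have key : ∀ i j, (φ i : V) ≠ f (φ j) := fun i j h => by
      have := hlt i; have := hlt j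
      rw [h, hf.involutive] at *
      exact lt_asymm ‹_› ‹_›
    fin_cases a <;> fin_cases b <;> simp at h
    · rw [h]
    · exact absurd h (key i j)
    · exact absurd h.symm (key j i)
    · rw [φ.injective (Subtype.ext (hf.involutive.injective h))]
  · rintro ⟨i, a⟩ ⟨j, b⟩ h
    obtain ⟨hne, rfl | rfl⟩ := (fromRel_adj _ _ _).1 h <;>
    · fin_cases a <;> fin_cases b <;> simp at hne ⊢
      · exact hf.adj_of_ne _ (hlt _).ne'
      · exact (hf.adj_of_ne _ (hlt _).ne').symm

end MatchingInvolution

section AlternatingWalk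

variable (f g : V → V) (u : V)

def altWalk : ℕ → V
  | 0 => u
  | i + 1 => (if Even i then g else f) (altWalk i)

lemma altWalk_succ (i : ℕ) :
    altWalk f g u (i + 1) = (if Even i then g else f) (altWalk f g u i) := rfl

lemma altWalk_two_mul (k : ℕ) : altWalk f g u (2 * k) = (f ∘ g)^[k] u := by
  induction k with
  | zero => rfl
  | succ k ih =>
    rw [Function.iterate_succ_apply', ← ih, Nat.mul_succ, altWalk_succ, altWalk_succ]
    simp

variable {f g u}

lemma altWalk_step_back (hf : f.Involutive) (hg : g.Involutive) (i : ℕ) :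
    (if Even i then g else f) (altWalk f g u (i + 1)) = altWalk f g u i := by
  rw [altWalk_succ]; split_ifs <;> simp [hf _, hg _]

/-- At `i = 0` this says `f u = u`, because `0 - 1 = 0`. -/
lemma altWalk_pred (hf : f.Involutive) (hg : g.Involutive) (hu : f u = u) (i : ℕ) :
    (if Even i then f else g) (altWalk f g u i) = altWalk f g u (i - 1) := by
  rcases i with _ | i
  · exact hu
  · rw [Nat.add_sub_cancel, ← altWalk_step_back hf hg i]
    simp only [Nat.even_add_one, ite_not]

/-- `f ∘ g` is a permutation, so the walk returns to `u` at some even time `2k > 0`; as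
`f u = u`, the step just before is a stall. -/
lemma exists_altWalk_succ_eq [Finite V] (hf : f.Involutive) (hg : g.Involutive) (hu : f u = u) :
    ∃ s, altWalk f g u (s + 1) = altWalk f g u s := by
  obtain ⟨k, hk, hper⟩ := (hf.injective.comp hg.injective).mem_periodicPts u
  obtain ⟨k, rfl⟩ := Nat.exists_eq_add_of_lt hk
  refine ⟨2 * k + 1, ?_⟩
  have hback := altWalk_step_back hf hg (u := u) (2 * k + 1)
  have hret : altWalk f g u (2 * k + 1 + 1) = u := by
    rw [show 2 * k + 1 + 1 = 2 * (0 + k + 1) by ring, altWalk_two_mul]; exact hper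
  simp only [Nat.not_even_two_mul_add_one, if_false, hret, hu] at hback
  exact hret.trans hback

/-- The vertices of the alternating path from the `f`-fixed point `u` up to its first stall: they
are invariant under `f` and `g`, and apart from `u` only the far end can be fixed by `f` or `g`. -/
theorem exists_invariant_finset_of_apply_eq_self [Finite V] (hf : f.Involutive)
    (hg : g.Involutive) (hu : f u = u) :
    ∃ P : Finset V, u ∈ P ∧ (∀ x ∈ P, f x ∈ P) ∧ (∀ x ∈ P, g x ∈ P) ∧
      ∀ x ∈ P, ∀ y ∈ P, x ≠ u → y ≠ u → (f x = x ∨ g x = x) → (f y = y ∨ g y = y) → x = y := by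
  classical
  set p := altWalk f g u
  have hstall := exists_altWalk_succ_eq hf hg hu
  set K := Nat.find hstall
  set P := (range (K + 1)).image p
  have hmem : ∀ i ≤ K + 1, p i ∈ P := fun i hi => by
    rcases hi.lt_or_eq with hi | rfl
    · exact mem_image_of_mem p (mem_range.2 hi)
    · have hK : p (K + 1) = p K := Nat.find_spec hstall
      exact hK ▸ mem_image_of_mem p (mem_range.2 K.lt_succ_self)
  have hnbrs : ∀ i, (f (p i) = p (i + 1) ∧ g (p i) = p (i - 1)) ∨
      (g (p i) = p (i + 1) ∧ f (p i) = p (i - 1)) := fun i => by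
    have h₁ := altWalk_succ f g u i
    have h₂ := altWalk_pred hf hg hu i
    split_ifs at h₁ h₂
    · exact .inr ⟨h₁.symm, h₂⟩
    · exact .inl ⟨h₁.symm, h₂⟩
  have hinv : ∀ x ∈ P, f x ∈ P ∧ g x ∈ P := by
    intro x hx
    obtain ⟨i, hi, rfl⟩ := mem_image.1 hx
    rw [mem_range] at hi
    have h₁ := hmem (i + 1) (by omega)
    have h₂ := hmem (i - 1) (by omega)
    rcases hnbrs i with ⟨e₁, e₂⟩ | ⟨e₁, e₂⟩ <;> rw [e₁, e₂] <;> exact ⟨‹_›, ‹_›⟩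
  have hfix : ∀ x ∈ P, x ≠ u → (f x = x ∨ g x = x) → x = p K := by
    intro x hx hxu hxfix
    obtain ⟨i, hi, rfl⟩ := mem_image.1 hx
    have hi0 : i ≠ 0 := by rintro rfl; exact hxu rfl
    rcases (Nat.lt_succ_iff.1 (mem_range.1 hi)).lt_or_eq with hiK | rfl
    · have h₁ : p (i + 1) ≠ p i := Nat.find_min hstall hiK
      have h₂ : p (i - 1) ≠ p i := fun h =>
        Nat.find_min hstall (show i - 1 < K by omega) (by rw [Nat.sub_add_cancel (by omega)]; exact h.symm)
      rcases hnbrs i with ⟨e₁, e₂⟩ | ⟨e₁, e₂⟩ <;> rw [e₁, e₂] at hxfix <;> tauto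
    · rfl
  exact ⟨P, hmem 0 (by omega), fun x hx => (hinv x hx).1, fun x hx => (hinv x hx).2,
    fun x hx y hy hxu hyu hxf hyf => (hfix x hx hxu hxf).trans (hfix y hy hyu hyf).symm⟩

end AlternatingWalk

section MatchingBound

variable [Fintype V] [DecidableEq V] {G : SimpleGraph V} {f : V → V} {u v : V}

/-- Gallai's lemma: if every vertex is missed by some maximum matching, then a maximum matching
misses at most one vertex of each connected component. -/
theorem IsMaxMatchingInvolution.eq_of_reachable
    (hmiss : ∀ w, ∃ g, IsMaxMatchingInvolution G g ∧ g w = w) (hf : IsMaxMatchingInvolution G f)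
    (hu : f u = u) (hv : f v = v) (huv : G.Reachable u v) : u = v := by
  obtain ⟨p⟩ := huv
  induction p generalizing f with
  | nil => rfl
  | @cons u w v huw q ih =>
    by_contra huv
    obtain ⟨g, hg, hgw⟩ := hmiss w
    obtain ⟨P, huP, hfP, hgP, hfix⟩ :=
      exists_invariant_finset_of_apply_eq_self hf.involutive hg.involutive hu
    have hwv : w ≠ v := by
      rintro rfl
      exact hf.not_adj hu hv huw
    -- exchange `f` and `g` on `P`: if `w ∉ P`, the new `g` misses the adjacent `u` and `w`;
    -- otherwise `v ∉ P`, and the new `f` misses `w` and `v`, which are joined by the shorter `q`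
    by_cases hwP : w ∈ P
    · have hvP : v ∉ P := fun hvP =>
        hwv (hfix w hwP v hvP huw.ne' (Ne.symm huv) (.inr hgw) (.inl hv))
      exact hwv (ih (hf.piecewise hg hfP hgP) (by simp [hwP, hgw]) (by simp [hvP, hv]))
    · exact (hg.piecewise hf hgP hfP).not_adj (by simp [huP, hu]) (by simp [hwP, hgw]) huw

variable [DecidableRel G.Adj] {d : ℕ}

lemma sum_degree_le_of_forall_adj_mem (hd : ∀ v, G.degree v ≤ d) {C : Finset V} (s : Finset V)
    (hC : ∀ x ∈ C, ∀ y, G.Adj x y → y ∈ C) (hCs : #(C \ s) ≤ 1) :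
    ∑ v ∈ C, G.degree v ≤ (d + 1) * #(C ∩ s) := by
  have hcard : #C ≤ #(C ∩ s) + 1 := by
    have := card_sdiff_add_card_inter C s
    omega
  have hdegC : ∀ v ∈ C, G.degree v ≤ #C - 1 := fun v hv => by
    rw [← card_neighborFinset_eq_degree, ← card_erase_of_mem hv]
    exact card_le_card fun y hy => mem_erase.2
      ⟨((mem_neighborFinset _ _ _).1 hy).ne', hC v hv y ((mem_neighborFinset _ _ _).1 hy)⟩
  rcases le_or_gt #C (d + 1) with hCd | hCd
  · calc ∑ v ∈ C, G.degree v ≤ #C * (#C - 1) := by simpa using sum_le_sum hdegC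
      _ ≤ (d + 1) * #(C ∩ s) := Nat.mul_le_mul hCd (by omega)
  · calc ∑ v ∈ C, G.degree v ≤ #C * d := by simpa using sum_le_sum fun v _ => hd v
      _ ≤ (d + 1) * #(C ∩ s) := by nlinarith

lemma two_mul_card_edgeFinset_le_of_reachable_imp_eq (hd : ∀ v, G.degree v ≤ d) (s : Finset V)
    (hs : ∀ u v, u ∉ s → v ∉ s → G.Reachable u v → u = v) :
    2 * #G.edgeFinset ≤ (d + 1) * #s := by
  classical
  let C (c : G.ConnectedComponent) : Finset V := {v | G.connectedComponentMk v = c}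
  rw [← sum_degrees_eq_twice_card_edges, ← sum_fiberwise univ G.connectedComponentMk,
    card_eq_sum_card_fiberwise (f := G.connectedComponentMk) (t := univ) (fun _ _ => mem_univ _),
    mul_sum]
  refine sum_le_sum fun c _ => ?_
  have hCs : #(C c \ s) ≤ 1 := card_le_one.2 fun x hx y hy => by
    simp only [C, mem_sdiff, mem_filter, mem_univ, true_and] at hx hy
    exact hs x y hx.2 hy.2 (ConnectedComponent.exact (hx.1.trans hy.1.symm))
  have hC : ∀ x ∈ C c, ∀ y, G.Adj x y → y ∈ C c := fun x hx y hxy => by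
    simp only [C, mem_filter, mem_univ, true_and] at hx ⊢
    exact (ConnectedComponent.sound hxy.reachable).symm.trans hx
  have hfiber : {v ∈ s | G.connectedComponentMk v = c} = C c ∩ s := by
    ext; simp [C, and_comm]
  rw [hfiber]
  exact sum_degree_le_of_forall_adj_mem hd s hC hCs

/-- Since `#(matchedVerts f)` is twice the matching number `ν`, this is `|E| ≤ (d + 1) ν`. -/
theorem two_mul_card_edgeFinset_le (hd : ∀ v, G.degree v ≤ d) (hf : IsMaxMatchingInvolution G f) :
    2 * #G.edgeFinset ≤ (d + 1) * #(matchedVerts f) := by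
  induction hn : #(matchedVerts f) using Nat.strong_induction_on generalizing G f with
  | _ n ih =>
  by_cases hmiss : ∀ w, ∃ g, IsMaxMatchingInvolution G g ∧ g w = w
  · exact hn ▸ two_mul_card_edgeFinset_le_of_reachable_imp_eq hd _ fun u v hu hv =>
      hf.eq_of_reachable hmiss (by simpa using hu) (by simpa using hv)
  push Not at hmiss
  obtain ⟨w, hw⟩ := hmiss
  set G' := G.deleteIncidenceSet w
  obtain ⟨f', hf'⟩ := exists_isMaxMatchingInvolution G'
  have hf'G := hf'.mono (deleteIncidenceSet_le G w)
  have hf'w : f' w = w := by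
    by_contra h
    simpa [G', deleteIncidenceSet_adj] using hf'.adj_of_ne w h
  have hlt : #(matchedVerts f') < n := (hn ▸ hf.card_le f' hf'G).lt_of_ne fun h =>
    hw f' ⟨hf'G, fun g hg => h ▸ hn ▸ hf.card_le g hg⟩ hf'w
  have hle : #(matchedVerts f') + 2 ≤ n := by
    obtain ⟨a, ha⟩ := hf'.even_card_matchedVerts
    obtain ⟨b, hb⟩ := hn ▸ hf.even_card_matchedVerts
    omega
  have hd' : ∀ v, G'.degree v ≤ d := fun v =>
    (degree_le_of_le (deleteIncidenceSet_le G w)).trans (hd v)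
  have hG' := ih _ hlt hd' hf' rfl
  have hedges : #G.edgeFinset = #G'.edgeFinset + G.degree w := by
    rw [card_edgeFinset_deleteIncidenceSet, Nat.sub_add_cancel (G.degree_le_card_edgeFinset w)]
  nlinarith [hd w]

theorem card_edgeFinset_le_of_not_copyIn {t : ℕ} (hM : ¬ CopyIn (matchingGraph t) G)
    (hS : ¬ CopyIn (_root_.starGraph t) G) : #G.edgeFinset ≤ t ^ 2 - t := by
  obtain ⟨f, hf⟩ := exists_isMaxMatchingInvolution G
  have hd : ∀ v, G.degree v ≤ t - 1 := fun v => by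
    have := mt copyIn_starGraph_iff.2 hS
    push Not at this
    exact Nat.le_sub_one_of_lt (this v)
  have hmatched : #(matchedVerts f) + 2 ≤ 2 * t := by
    have := mt hf.copyIn_matchingGraph hM
    obtain ⟨a, ha⟩ := hf.even_card_matchedVerts
    omega
  have := two_mul_card_edgeFinset_le hd hf
  obtain ⟨s, rfl⟩ : ∃ s, t = s + 1 := ⟨t - 1, by omega⟩
  rw [show (s + 1) ^ 2 - (s + 1) = (s + 1) * s by
    rw [Nat.sub_eq_iff_eq_add (by nlinarith)]; ring]
  simp only [add_tsub_cancel_right] at this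
  nlinarith

end MatchingBound

abbrev twoCliques (t m : ℕ) : SimpleGraph ((Fin t ⊕ Fin t) ⊕ Fin m) :=
  (completeGraph (Fin t) ⊕g completeGraph (Fin t)) ⊕g (⊥ : SimpleGraph (Fin m))

lemma ncard_edgeSet_twoCliques (t m : ℕ) : (twoCliques t m).edgeSet.ncard = t ^ 2 - t := by
  rw [ncard_edgeSet_sum, ncard_edgeSet_sum, ncard_edgeSet_completeGraph, edgeSet_bot,
    Set.ncard_empty, Fintype.card_fin, Nat.choose_two_right, sq, ← Nat.mul_sub_one]
  have := Nat.div_mul_cancel (Nat.even_mul_pred_self t).two_dvd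
  omega

lemma degree_twoCliques_le {t m : ℕ} (v : (Fin t ⊕ Fin t) ⊕ Fin m) :
    (twoCliques t m).degree v ≤ t - 1 := by
  rcases v with (a | a) | a
  · rw [degree_sum_inl, degree_sum_inl, complete_graph_degree, Fintype.card_fin]
  · rw [degree_sum_inl, degree_sum_inr, complete_graph_degree, Fintype.card_fin]
  · simp [degree_sum_inr]

lemma not_copyIn_starGraph_twoCliques {t : ℕ} (ht : 0 < t) (m : ℕ) :
    ¬ CopyIn (_root_.starGraph t) (twoCliques t m) := by
  rw [copyIn_starGraph_iff]
  rintro ⟨v, hv⟩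
  have := degree_twoCliques_le v
  omega

lemma not_copyIn_matchingGraph_twoCliques {t : ℕ} (ht : Odd t) (m : ℕ) :
    ¬ CopyIn (matchingGraph t) (twoCliques t m) := by
  rintro ⟨F, hF⟩
  let L : Finset ((Fin t ⊕ Fin t) ⊕ Fin m) := univ.image (Sum.inl ∘ Sum.inl)
  let R : Finset ((Fin t ⊕ Fin t) ⊕ Fin m) := univ.image (Sum.inl ∘ Sum.inr)
  have hL := two_mul_card_filter_le_of_copy F hF (s := L) (by
    simp only [L, mem_image, mem_univ, true_and, Function.comp_apply]
    rintro _ ⟨a, rfl⟩ ((b | b) | b) h <;> simp_all)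
  have hR := two_mul_card_filter_le_of_copy F hF (s := R) (by
    simp only [R, mem_image, mem_univ, true_and, Function.comp_apply]
    rintro _ ⟨a, rfl⟩ ((b | b) | b) h <;> simp_all)
  have hcover : (univ : Finset (Fin t)) ⊆
      ({i | F (i, 0) ∈ L} : Finset (Fin t)) ∪ ({i | F (i, 0) ∈ R} : Finset (Fin t)) := by
    have hLR : ∀ x y, (twoCliques t m).Adj x y → x ∈ L ∨ x ∈ R := by
      rintro ((a | a) | a) ((b | b) | b) h <;> simp [L, R] at h ⊢
    intro i _
    simpa using hLR _ _ (hF (i, 0) (i, 1) (by simp [matchingGraph]))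
  have hcard := (card_le_card hcover).trans (card_union_le _ _)
  have hL' : #L = t := by
    simp [L, card_image_of_injective _ (Sum.inl_injective.comp Sum.inl_injective)]
  have hR' : #R = t := by
    simp [R, card_image_of_injective _ (Sum.inl_injective.comp Sum.inr_injective)]
  obtain ⟨k, rfl⟩ := ht
  simp only [card_univ, Fintype.card_fin] at hcard
  omega

lemma exNum2_eq_of_forall_le {α β : Type*} [Fintype W] {n : ℕ} {A : SimpleGraph α}
    {B : SimpleGraph β} (X : SimpleGraph W) (hW : Fintype.card W = n) (hA : ¬ CopyIn A X)
    (hB : ¬ CopyIn B X) (hle : ∀ G : SimpleGraph (Fin n), ¬ CopyIn A G → ¬ CopyIn B G →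
      G.edgeSet.ncard ≤ X.edgeSet.ncard) :
    exNum2 n A B = X.edgeSet.ncard := by
  let iso : X ≃g X.map (Fintype.equivFinOfCardEq hW).toEmbedding := Iso.map _ X
  have hmem : X.edgeSet.ncard ∈ {k | ∃ G : SimpleGraph (Fin n),
      ¬ CopyIn A G ∧ ¬ CopyIn B G ∧ k = G.edgeSet.ncard} := by
    refine ⟨X.map (Fintype.equivFinOfCardEq hW).toEmbedding, ?_, ?_, ?_⟩
    · rwa [copyIn_iff_isContained, ← isContained_congr_right iso, ← copyIn_iff_isContained]
    · rwa [copyIn_iff_isContained, ← isContained_congr_right iso, ← copyIn_iff_isContained]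
    · simp only [← Nat.card_coe_set_eq, Nat.card_congr iso.mapEdgeSet]
  refine le_antisymm (csSup_le ⟨_, hmem⟩ ?_) (le_csSup ⟨X.edgeSet.ncard, ?_⟩ hmem) <;>
  · rintro _ ⟨G, hGA, hGB, rfl⟩
    exact hle G hGA hGB

end SimpleGraph

theorem abbott_hanson_sauer_odd_general (t n : ℕ) (hodd : Odd t) (hn : 2 * t ≤ n) :
    exNum2 n (matchingGraph t) (_root_.starGraph t) = t ^ 2 - t ∧
    ¬ CopyIn (matchingGraph t)
      ((completeGraph (Fin t) ⊕g completeGraph (Fin t)) ⊕g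
        (⊥ : SimpleGraph (Fin (n - 2 * t)))) ∧
    ¬ CopyIn (_root_.starGraph t)
      ((completeGraph (Fin t) ⊕g completeGraph (Fin t)) ⊕g
        (⊥ : SimpleGraph (Fin (n - 2 * t)))) ∧
    ((completeGraph (Fin t) ⊕g completeGraph (Fin t)) ⊕g
        (⊥ : SimpleGraph (Fin (n - 2 * t)))).edgeSet.ncard = t ^ 2 - t := by
  have hM := not_copyIn_matchingGraph_twoCliques hodd (n - 2 * t)
  have hS := not_copyIn_starGraph_twoCliques hodd.pos (n - 2 * t)
  have hE := ncard_edgeSet_twoCliques t (n - 2 * t)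
  refine ⟨?_, hM, hS, hE⟩
  rw [← hE]
  have hcard : Fintype.card ((Fin t ⊕ Fin t) ⊕ Fin (n - 2 * t)) = n := by
    simp only [Fintype.card_sum, Fintype.card_fin]; omega
  refine exNum2_eq_of_forall_le _ hcard hM hS fun G hGM hGS => ?_
  classical
  rw [hE, ← coe_edgeFinset, Set.ncard_coe_finset]
  exact card_edgeFinset_le_of_not_copyIn hGM hGS

theorem abbott_hanson_sauer_odd (t n : ℕ) (ht : 1 ≤ t) (hodd : Odd t) (hn : 2 * t ≤ n) :
    exNum2 n (matchingGraph t) (_root_.starGraph t) = t ^ 2 - t ∧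
    ¬ CopyIn (matchingGraph t)
      ((completeGraph (Fin t) ⊕g completeGraph (Fin t)) ⊕g
        (⊥ : SimpleGraph (Fin (n - 2 * t)))) ∧
    ¬ CopyIn (_root_.starGraph t)
      ((completeGraph (Fin t) ⊕g completeGraph (Fin t)) ⊕g
        (⊥ : SimpleGraph (Fin (n - 2 * t)))) ∧
    ((completeGraph (Fin t) ⊕g completeGraph (Fin t)) ⊕g
        (⊥ : SimpleGraph (Fin (n - 2 * t)))).edgeSet.ncard = t ^ 2 - t :=
  abbott_hanson_sauer_odd_general t n hodd hn
end
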